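/- In the dependency graph of a finite set of TGDs, a position has infinite rank if and only if it is reachable from a position lying on a cycle that contains at least one special edge; equivalently, a position π has finite rank iff no path ending at π passes through a cycle containing a special edge. -/

import Mathlib

/-- `RankGE edge special v n` holds when there is a finite path in the
dependency graph ending at `v` that uses at least `n` special edges. -/
inductive RankGE {V : Type} (edge special : V → V → Prop) : V → ℕ → Prop
  | refl (v : V) : RankGE edge special v 0
  | step {u v : V} {n : ℕ} : RankGE edge special u n → edge u v →
      RankGE edge special v n
  | sstep {u v : V} {n : ℕ} : RankGE edge special u n → special u v →
      RankGE edge special v (n + 1)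

/-- A position has finite rank if the number of special edges on paths ending
at it is bounded. -/
def FiniteRank {V : Type} (edge special : V → V → Prop) (v : V) : Prop :=
  ∃ N, ∀ n, RankGE edge special v n → n ≤ N

/-!
A special edge on a cycle can be traversed arbitrarily often, so every position
reachable from such a cycle has infinite rank. Conversely, if no such cycle reaches
`π`, then the tails of the special edges on a path ending at `π` are pairwise
distinct: a repeated tail `u` would give a cycle through the special edge leaving `u`
from which `π` is reachable. Hence such a path has at most `|V|` special edges.
-/

def ReachableFromSpecialCycle {V : Type} (edge special : V → V → Prop) (v : V) : Prop :=
  ∃ u w, special u w ∧ Relation.ReflTransGen edge w u ∧ Relation.ReflTransGen edge w v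

section

variable {V : Type} {edge special : V → V → Prop}

theorem RankGE.of_reflTransGen {u v : V} {n : ℕ} (h : RankGE edge special u n)
    (huv : Relation.ReflTransGen edge u v) : RankGE edge special v n := by
  induction huv with
  | refl => exact h
  | tail _ he ih => exact ih.step he

theorem ReachableFromSpecialCycle.of_reflTransGen {u v : V}
    (h : ReachableFromSpecialCycle edge special u) (huv : Relation.ReflTransGen edge u v) :
    ReachableFromSpecialCycle edge special v := by
  obtain ⟨a, b, hab, hba, hbu⟩ := h
  exact ⟨a, b, hab, hba, hbu.trans huv⟩

theorem RankGE.of_reachableFromSpecialCycle {v : V}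
    (hv : ReachableFromSpecialCycle edge special v) (n : ℕ) : RankGE edge special v n := by
  obtain ⟨u, w, huw, hwu, hwv⟩ := hv
  have pump : ∀ n, RankGE edge special w n := by
    intro n
    induction n with
    | zero => exact RankGE.refl w
    | succ n ih => exact (ih.of_reflTransGen hwu).sstep huw
  exact (pump n).of_reflTransGen hwv

theorem RankGE.exists_finset_of_not_reachableFromSpecialCycle
    (hs : ∀ u v, special u v → edge u v) {v : V} {n : ℕ} (h : RankGE edge special v n)
    (hv : ¬ ReachableFromSpecialCycle edge special v) :
    ∃ S : Finset V, n ≤ S.card ∧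
      ∀ x ∈ S, ∃ w, special x w ∧ Relation.ReflTransGen edge w v := by
  classical
  induction h with
  | refl v => exact ⟨∅, le_rfl, by simp⟩
  | @step u v n _ he ih =>
    have hu : ¬ ReachableFromSpecialCycle edge special u := fun hu => hv (hu.of_reflTransGen (.single he))
    obtain ⟨S, hcard, hS⟩ := ih hu
    refine ⟨S, hcard, fun x hx => ?_⟩
    obtain ⟨w, hxw, hwu⟩ := hS x hx
    exact ⟨w, hxw, hwu.tail he⟩
  | @sstep u v n _ huv ih =>
    have hu : ¬ ReachableFromSpecialCycle edge special u := fun hu => hv (hu.of_reflTransGen (.single (hs u v huv)))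
    obtain ⟨S, hcard, hS⟩ := ih hu
    have huS : u ∉ S := fun huS => by
      obtain ⟨w, huw, hwu⟩ := hS u huS
      exact hu ⟨u, w, huw, hwu, hwu⟩
    refine ⟨insert u S, by rw [Finset.card_insert_of_notMem huS]; omega, fun x hx => ?_⟩
    rcases Finset.mem_insert.mp hx with rfl | hx
    · exact ⟨v, huv, .refl⟩
    · obtain ⟨w, hxw, hwu⟩ := hS x hx
      exact ⟨w, hxw, hwu.tail (hs u v huv)⟩

theorem RankGE.le_card_of_not_reachableFromSpecialCycle [Fintype V]
    (hs : ∀ u v, special u v → edge u v) {v : V} {n : ℕ} (h : RankGE edge special v n)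
    (hv : ¬ ReachableFromSpecialCycle edge special v) : n ≤ Fintype.card V := by
  obtain ⟨S, hcard, -⟩ := h.exists_finset_of_not_reachableFromSpecialCycle hs hv
  exact hcard.trans S.card_le_univ

end

/-- In the (finite) dependency graph of a finite set of TGDs, a position `π`
has infinite rank if and only if it is reachable from a position lying on a
cycle that contains at least one special edge. -/
theorem infiniteRank_iff_special_cycle {V : Type} [Fintype V]
    (edge special : V → V → Prop) (hs : ∀ u v, special u v → edge u v) (π : V) :
    ¬ FiniteRank edge special π ↔
      ∃ u w, special u w ∧ Relation.ReflTransGen edge w u ∧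
        Relation.ReflTransGen edge w π := by
  change ¬ FiniteRank edge special π ↔ ReachableFromSpecialCycle edge special π
  constructor
  · intro hinf
    by_contra hπ
    exact hinf ⟨Fintype.card V, fun n h => h.le_card_of_not_reachableFromSpecialCycle hs hπ⟩
  · rintro hπ ⟨N, hN⟩
    have := hN (N + 1) (RankGE.of_reachableFromSpecialCycle hπ (N + 1))
    omega
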